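/- With notation as in the construction (k ≥ 1, J dyadic, μ = μ_J^λ, S = S_{J,r}), the level set {x : |S μ(x)| > k·μ(J)/|J|} equals exactly the left half of I(J), and consequently μ({x : |S μ(x)| > k μ(J)/|J|}) = (1/4)·2^{-4k}·μ(J). -/

import Mathlib

open MeasureTheory Set

/-!
By induction along the chain, each `I_i` has length `4^{-i}|J|` and `jp(J)` one third of the way
through it. Hence `⟨μ, h_{I_i}⟩ h_{I_i} = (λ/3)(1_{right half of I_i} - 1_{left half of I_i})`, so
`|Sμ|` is `λ/3` times the absolute value of a sum of `2k+1` terms in `{-1, 0, 1}`, while the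
threshold `k μ(J)/|J|` is `λ/3` times `2k`. On the left half of `I_{2k}` all terms are `-1`; on
its right half the first and last terms cancel, and outside `I_{2k}` the last term vanishes, so
there the sum is at most `2k` in absolute value.
-/

/-- The dyadic interval `[2^k m, 2^k (m+1))`. -/
noncomputable def dyadicI (k m : ℤ) : Set ℝ := Set.Ico ((2:ℝ)^k * m) ((2:ℝ)^k * (m+1))

/-- The "jumping point" of the dyadic interval `J = [2^n p, 2^n (p+1))`. -/
noncomputable def jp (n p : ℤ) : ℝ := (2:ℝ)^n * p + (2:ℝ)^n / 3

/-- The right endpoint of the dyadic interval `J = [2^n p, 2^n (p+1))`. -/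
noncomputable def rep (n p : ℤ) : ℝ := (2:ℝ)^n * (p + 1)

/-- The measure `μ_J^λ = λ·1_{[jp(J), rep(J))} dx` applied to a set `A`. -/
noncomputable def muMeas (n p : ℤ) (lam : ℝ) (A : Set ℝ) : ℝ :=
  lam * (volume (A ∩ Set.Ico (jp n p) (rep n p))).toReal

/-- The `L²`-normalized Haar function of `dyadicI k m`. -/
noncomputable def haarF (k m : ℤ) (x : ℝ) : ℝ :=
  ((dyadicI (k-1) (2*m+1)).indicator (fun _ => (1:ℝ)) x
    - (dyadicI (k-1) (2*m)).indicator (fun _ => (1:ℝ)) x) / Real.sqrt ((2:ℝ)^k)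

/-- `⟨μ_J^λ, h_I⟩ = ∫ h_I dμ_J^λ`. -/
noncomputable def haarCoeff (n p : ℤ) (lam : ℝ) (km : ℤ × ℤ) : ℝ :=
  ∫ x in Set.Ico (jp n p) (rep n p), lam * haarF km.1 km.2 x

lemma volume_dyadicI (a q : ℤ) : volume (dyadicI a q) = ENNReal.ofReal ((2:ℝ)^a) := by
  rw [dyadicI, Real.volume_Ico]; ring_nf

lemma dyadicI_left_half {a q : ℤ} {x : ℝ} (h : jp a q = x) :
    dyadicI (a-1) (2*q) = Ico (x - (2:ℝ)^a/3) (x + (2:ℝ)^a/6) := by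
  subst h
  rw [dyadicI, jp, zpow_sub_one₀ two_ne_zero]
  congr 1 <;> push_cast <;> ring

lemma dyadicI_right_half {a q : ℤ} {x : ℝ} (h : jp a q = x) :
    dyadicI (a-1) (2*q+1) = Ico (x + (2:ℝ)^a/6) (x + 2*(2:ℝ)^a/3) := by
  subst h
  rw [dyadicI, jp, zpow_sub_one₀ two_ne_zero]
  congr 1 <;> push_cast <;> ring

lemma exponent_eq_add_two_of_volume_eq_four_mul {a q b m : ℤ}
    (h : volume (dyadicI a q) = 4 * volume (dyadicI b m)) : a = b + 2 := by
  rw [volume_dyadicI, volume_dyadicI, ← ENNReal.ofReal_ofNat 4, ← ENNReal.ofReal_mul (by norm_num),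
    ENNReal.ofReal_eq_ofReal_iff (by positivity) (by positivity)] at h
  apply zpow_right_injective₀ (G₀ := ℝ) two_pos (by norm_num : (2:ℝ) ≠ 1)
  simp only [h, zpow_add₀ (two_ne_zero : (2:ℝ) ≠ 0)]
  norm_num [mul_comm]

/-- The membership forces `m = 4q+1`. -/
lemma jp_eq_of_mem_left_half {b q m : ℤ} {x : ℝ} (h : jp (b+2) q = x)
    (hx : x ∈ dyadicI (b-1) (2*m)) : jp b m = x := by
  have hs : (0:ℝ) < (2:ℝ)^b := by positivity
  have hx' : x = (2:ℝ)^b * (4*q+1) + (2:ℝ)^b/3 := by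
    rw [← h, jp, zpow_add₀ two_ne_zero]; ring
  rw [dyadicI, zpow_sub_one₀ two_ne_zero, mem_Ico, hx'] at hx
  push_cast at hx
  obtain ⟨hlo, hhi⟩ := hx
  have hm : m = 4*q+1 := by
    have h1 : (m:ℝ) < 4*q+2 := lt_of_mul_lt_mul_left (by linarith) hs.le
    have h2 : (4*q+1:ℝ) < m+1 := lt_of_mul_lt_mul_left (by linarith) hs.le
    have : m < 4*q+2 := by exact_mod_cast h1
    have : 4*q+1 < m+1 := by exact_mod_cast h2
    omega
  rw [jp, hx', hm]; push_cast; ring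

lemma fst_eq_and_jp_eq_of_chain {m : ℕ} {n p : ℤ} {c : Fin (m+1) → ℤ × ℤ} (h0 : c 0 = (n, p))
    (hjp : ∀ i, jp n p ∈ dyadicI ((c i).1 - 1) (2 * (c i).2))
    (hlen : ∀ i : Fin m, volume (dyadicI (c i.castSucc).1 (c i.castSucc).2)
        = 4 * volume (dyadicI (c i.succ).1 (c i.succ).2))
    (i : Fin (m+1)) : (c i).1 = n - 2*(i:ℕ) ∧ jp (c i).1 (c i).2 = jp n p := by
  induction i using Fin.induction with
  | zero => simp [h0]
  | succ i ih =>
    obtain ⟨hfst, hjp_i⟩ := ih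
    have hstep := exponent_eq_add_two_of_volume_eq_four_mul (hlen i)
    refine ⟨by simp only [Fin.val_succ, Fin.val_castSucc] at hfst ⊢; push_cast; omega, ?_⟩
    rw [hstep] at hjp_i
    exact jp_eq_of_mem_left_half hjp_i (hjp i.succ)

lemma muMeas_Ico {n p : ℤ} (lam : ℝ) {a b : ℝ} (hab : a ≤ b) (hb : jp n p ≤ b)
    (hb' : b ≤ rep n p) : muMeas n p lam (Ico a b) = lam * (b - max a (jp n p)) := by
  rw [muMeas, Ico_inter_Ico, min_eq_left hb', Real.volume_Ico,
    ENNReal.toReal_ofReal (sub_nonneg.2 (max_le hab hb))]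

lemma setIntegral_indicator_eq_muMeas (n p : ℤ) (lam : ℝ) {B : Set ℝ} (hB : MeasurableSet B) :
    ∫ y in Ico (jp n p) (rep n p), B.indicator (fun _ => lam) y = muMeas n p lam B := by
  rw [integral_indicator_const _ hB, measureReal_restrict_apply hB, smul_eq_mul, mul_comm, muMeas,
    measureReal_def]

/-- The Haar function of a dyadic interval of length `t` whose jumping point is `x`,
times `√t`. -/
noncomputable def haarShape (x t y : ℝ) : ℝ :=
  (Ico (x + t/6) (x + 2*t/3)).indicator (fun _ => (1:ℝ)) y
    - (Ico (x - t/3) (x + t/6)).indicator (fun _ => (1:ℝ)) y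

lemma haarF_eq_haarShape {a q : ℤ} {x : ℝ} (h : jp a q = x) (y : ℝ) :
    haarF a q y = haarShape x ((2:ℝ)^a) y / √((2:ℝ)^a) := by
  rw [haarF, haarShape, dyadicI_left_half h, dyadicI_right_half h]

lemma rep_eq_jp_add (n p : ℤ) : rep n p = jp n p + 2*(2:ℝ)^n/3 := by
  rw [rep, jp]; ring

lemma muMeas_dyadicI_self (n p : ℤ) (lam : ℝ) :
    muMeas n p lam (dyadicI n p) = 2 * lam * (2:ℝ)^n / 3 := by
  have h2n : (0:ℝ) < (2:ℝ)^n := by positivity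
  have hleft : (2:ℝ)^n * p ≤ jp n p := by rw [jp]; linarith
  have hrep := rep_eq_jp_add n p
  rw [dyadicI, ← rep, muMeas_Ico _ (by linarith) (by linarith) le_rfl, max_eq_right hleft, hrep]
  ring

lemma muMeas_dyadicI_self_div_volume (n p : ℤ) (lam : ℝ) :
    muMeas n p lam (dyadicI n p) / (volume (dyadicI n p)).toReal = 2 * lam / 3 := by
  rw [muMeas_dyadicI_self, volume_dyadicI, ENNReal.toReal_ofReal (by positivity)]
  field_simp

lemma haarCoeff_eq {n p a q : ℤ} (lam : ℝ) (h : jp a q = jp n p) (ha : a ≤ n) :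
    haarCoeff n p lam (a, q) = lam * √((2:ℝ)^a) / 3 := by
  set t := (2:ℝ)^a
  have ht : 0 < t := by positivity
  have htn : t ≤ (2:ℝ)^n := zpow_le_zpow_right₀ one_le_two ha
  have hrep := rep_eq_jp_add n p
  have hpoint : ∀ y, lam * haarF a q y
      = ((Ico (jp n p + t/6) (jp n p + 2*t/3)).indicator (fun _ => lam) y
        - (Ico (jp n p - t/3) (jp n p + t/6)).indicator (fun _ => lam) y) / √t := by
    intro y
    simp only [haarF_eq_haarShape h, haarShape, indicator_apply]
    split_ifs <;> ring
  have hint : ∀ u v : ℝ, IntegrableOn ((Ico u v).indicator fun _ => lam) (Ico (jp n p) (rep n p)) :=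
    fun u v => (integrableOn_const measure_Ico_lt_top.ne).indicator measurableSet_Ico
  rw [haarCoeff, funext hpoint, integral_div, integral_sub (hint _ _) (hint _ _),
    setIntegral_indicator_eq_muMeas _ _ _ measurableSet_Ico,
    setIntegral_indicator_eq_muMeas _ _ _ measurableSet_Ico,
    muMeas_Ico _ (by linarith) (by linarith) (by linarith),
    muMeas_Ico _ (by linarith) (by linarith) (by linarith),
    max_eq_left (by linarith), max_eq_right (by linarith)]
  have hsq : √t * √t = t := Real.mul_self_sqrt ht.le
  field_simp
  linear_combination (-(lam * 6)) * hsq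

lemma haarCoeff_mul_haarF {n p a q : ℤ} (lam : ℝ) (h : jp a q = jp n p) (ha : a ≤ n) (y : ℝ) :
    haarCoeff n p lam (a, q) * haarF a q y = lam/3 * haarShape (jp n p) ((2:ℝ)^a) y := by
  have : √((2:ℝ)^a) ≠ 0 := by positivity
  rw [haarCoeff_eq lam h ha, haarF_eq_haarShape h]
  field_simp

lemma abs_haarSum_eq_of_chain {m : ℕ} {n p : ℤ} {lam r : ℝ} (hlam : 0 < lam) (hr : |r| = 1)
    {c : Fin (m+1) → ℤ × ℤ}
    (hc : ∀ i, (c i).1 = n - 2*(i:ℕ) ∧ jp (c i).1 (c i).2 = jp n p) (y : ℝ) :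
    |r * ∑ i : Fin (m+1), haarCoeff n p lam (c i) * haarF (c i).1 (c i).2 y|
      = lam/3 * |∑ i ∈ Finset.range (m+1), haarShape (jp n p) ((2:ℝ)^(n - 2*(i:ℤ))) y| := by
  have hterm : ∀ i : Fin (m+1), haarCoeff n p lam (c i) * haarF (c i).1 (c i).2 y
      = lam/3 * haarShape (jp n p) ((2:ℝ)^(n - 2*((i:ℕ):ℤ))) y := fun i => by
    rw [haarCoeff_mul_haarF lam (hc i).2 (by rw [(hc i).1]; omega), (hc i).1]
  rw [Finset.sum_congr rfl fun i _ => hterm i, ← Finset.mul_sum,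
    Fin.sum_univ_eq_sum_range (fun i => haarShape (jp n p) ((2:ℝ)^(n - 2*(i:ℤ))) y), abs_mul,
    abs_mul, hr, one_mul, abs_of_pos (by positivity : 0 < lam/3)]

lemma abs_haarShape_le_one (x t y : ℝ) : |haarShape x t y| ≤ 1 := by
  unfold haarShape
  by_cases h1 : y ∈ Ico (x + t/6) (x + 2*t/3) <;> by_cases h2 : y ∈ Ico (x - t/3) (x + t/6) <;>
    simp [h1, h2]

lemma haarShape_of_mem_left {x t y : ℝ} (h : y ∈ Ico (x - t/3) (x + t/6)) :
    haarShape x t y = -1 := by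
  have h' : y ∉ Ico (x + t/6) (x + 2*t/3) := fun h' => (not_lt.2 h'.1) h.2
  simp [haarShape, h, h']

lemma haarShape_of_notMem_left {x t y : ℝ} (h : y ∉ Ico (x - t/3) (x + t/6)) :
    haarShape x t y = (Ico (x + t/6) (x + 2*t/3)).indicator (fun _ => (1:ℝ)) y := by
  simp [haarShape, h]

lemma abs_sum_range_le_of_abs_first_add_last_le {f : ℕ → ℝ} {N : ℕ} (hN : 1 ≤ N)
    (hf : ∀ i, |f i| ≤ 1) (h0N : |f 0 + f N| ≤ 1) : |∑ i ∈ Finset.range (N+1), f i| ≤ N := by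
  obtain ⟨M, rfl⟩ := Nat.exists_eq_add_of_le' hN
  rw [Finset.sum_range_succ, Finset.sum_range_succ', add_assoc]
  calc |∑ i ∈ Finset.range M, f (i+1) + (f 0 + f (M+1))|
      ≤ ∑ i ∈ Finset.range M, |f (i+1)| + |f 0 + f (M+1)| :=
        (abs_add_le _ _).trans (add_le_add_left (Finset.abs_sum_le_sum_abs _ _) _)
    _ ≤ ∑ _i ∈ Finset.range M, (1:ℝ) + 1 := by gcongr with i; exact hf _
    _ = ((M+1 : ℕ) : ℝ) := by simp

lemma lt_abs_sum_haarShape_iff {x : ℝ} {t : ℕ → ℝ} {N : ℕ} (hN : 1 ≤ N)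
    (hmono : ∀ i ≤ N, t N ≤ t i) (h4 : 4 * t N ≤ t 0) (y : ℝ) :
    (N:ℝ) < |∑ i ∈ Finset.range (N+1), haarShape x (t i) y| ↔ y ∈ Ico (x - t N/3) (x + t N/6) := by
  constructor
  · intro hlt
    by_contra hL
    refine hlt.not_ge (abs_sum_range_le_of_abs_first_add_last_le hN
      (fun i => abs_haarShape_le_one _ _ _) ?_)
    rw [haarShape_of_notMem_left hL]
    by_cases hR : y ∈ Ico (x + t N/6) (x + 2*t N/3)
    · have hpos : 0 < t N := by linarith [hR.1, hR.2]
      rw [indicator_of_mem hR, haarShape_of_mem_left ⟨by linarith [hR.1], by linarith [hR.2]⟩]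
      norm_num
    · rw [indicator_of_notMem hR, add_zero]
      exact abs_haarShape_le_one _ _ _
  · intro hL
    have hall : ∀ i ∈ Finset.range (N+1), haarShape x (t i) y = -1 := fun i hi =>
      haarShape_of_mem_left ⟨by linarith [hL.1, hmono i (Finset.mem_range_succ_iff.1 hi)],
        by linarith [hL.2, hmono i (Finset.mem_range_succ_iff.1 hi)]⟩
    rw [Finset.sum_congr rfl hall, Finset.sum_const, Finset.card_range, nsmul_eq_mul, abs_mul,
      abs_neg, abs_one, mul_one, Nat.abs_cast]
    push_cast
    linarith

theorem stmt6_general (k : ℕ) (hk : 1 ≤ k) (n p : ℤ) (lam r : ℝ) (hlam : 0 < lam)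
    (hr : r = 1 ∨ r = -1)
    (c : Fin (2*k+1) → ℤ × ℤ)
    (h0 : c 0 = (n, p))
    (hjp : ∀ i, jp n p ∈ dyadicI ((c i).1 - 1) (2 * (c i).2))
    (hlen : ∀ i : Fin (2*k),
      volume (dyadicI (c i.castSucc).1 (c i.castSucc).2)
        = 4 * volume (dyadicI (c i.succ).1 (c i.succ).2)) :
    {x : ℝ | (k : ℝ) * (muMeas n p lam (dyadicI n p) / (volume (dyadicI n p)).toReal)
        < |r * ∑ i : Fin (2*k+1), haarCoeff n p lam (c i) * haarF (c i).1 (c i).2 x|}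
      = dyadicI ((c (Fin.last (2*k))).1 - 1) (2 * (c (Fin.last (2*k))).2) ∧
    muMeas n p lam
        {x : ℝ | (k : ℝ) * (muMeas n p lam (dyadicI n p) / (volume (dyadicI n p)).toReal)
          < |r * ∑ i : Fin (2*k+1), haarCoeff n p lam (c i) * haarF (c i).1 (c i).2 x|}
      = (1/4) * ((2:ℝ)^(4*k))⁻¹ * muMeas n p lam (dyadicI n p) := by
  have hchain := fst_eq_and_jp_eq_of_chain h0 hjp hlen
  have hr' : |r| = 1 := by rcases hr with rfl | rfl <;> simp
  set T := (2:ℝ)^(n - 2*((2*k : ℕ) : ℤ)) with hTdef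
  have hlevel : {x : ℝ | (k : ℝ) * (muMeas n p lam (dyadicI n p) / (volume (dyadicI n p)).toReal)
        < |r * ∑ i : Fin (2*k+1), haarCoeff n p lam (c i) * haarF (c i).1 (c i).2 x|}
      = Ico (jp n p - T/3) (jp n p + T/6) := by
    ext y
    rw [mem_ofPred_eq, muMeas_dyadicI_self_div_volume, abs_haarSum_eq_of_chain hlam hr' hchain,
      show (k:ℝ) * (2 * lam / 3) = lam/3 * ((2*k : ℕ) : ℝ) by push_cast; ring,
      mul_lt_mul_iff_right₀ (by positivity)]
    refine lt_abs_sum_haarShape_iff (by omega) (fun i hi => ?_) ?_ y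
    · exact zpow_le_zpow_right₀ one_le_two (by omega)
    · rw [show (4:ℝ) = 2^(2:ℤ) by norm_num, ← zpow_add₀ two_ne_zero]
      exact zpow_le_zpow_right₀ one_le_two (by push_cast; omega)
  refine ⟨?_, ?_⟩
  · rw [hlevel, dyadicI_left_half (hchain _).2, (hchain _).1, Fin.val_last]
  · have hT : T = (2:ℝ)^n / 2^(4*k) := by
      rw [hTdef, zpow_sub₀ two_ne_zero, ← zpow_natCast]
      push_cast
      ring_nf
    have hTpos : 0 < T := by positivity
    have hTle : T ≤ (2:ℝ)^n := by
      rw [hT]; exact div_le_self (by positivity) (one_le_pow₀ one_le_two)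
    have hrep := rep_eq_jp_add n p
    rw [hlevel, muMeas_Ico _ (by linarith) (by linarith) (by linarith), max_eq_right (by linarith),
      muMeas_dyadicI_self, hT]
    field_simp
    ring

/-- The level set `{x : |S_{J,r} μ_J^λ (x)| > k μ_J^λ(J)/|J|}` is exactly the left half
of `I(J) = I_{2k}`, and its `μ_J^λ` measure equals `(1/4)·2^{-4k}·μ_J^λ(J)`. -/
theorem stmt6 (k : ℕ) (hk : 1 ≤ k) (n p : ℤ) (lam r : ℝ) (hlam : 0 < lam)
    (hr : r = 1 ∨ r = -1)
    (c : Fin (2*k+1) → ℤ × ℤ)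
    (h0 : c 0 = (n, p))
    (hjp : ∀ i, jp n p ∈ dyadicI ((c i).1 - 1) (2 * (c i).2))
    (hnest : ∀ i : Fin (2*k),
      dyadicI (c i.succ).1 (c i.succ).2 ⊆ dyadicI (c i.castSucc).1 (c i.castSucc).2)
    (hlen : ∀ i : Fin (2*k),
      volume (dyadicI (c i.castSucc).1 (c i.castSucc).2)
        = 4 * volume (dyadicI (c i.succ).1 (c i.succ).2)) :
    {x : ℝ | (k : ℝ) * (muMeas n p lam (dyadicI n p) / (volume (dyadicI n p)).toReal)
        < |r * ∑ i : Fin (2*k+1), haarCoeff n p lam (c i) * haarF (c i).1 (c i).2 x|}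
      = dyadicI ((c (Fin.last (2*k))).1 - 1) (2 * (c (Fin.last (2*k))).2) ∧
    muMeas n p lam
        {x : ℝ | (k : ℝ) * (muMeas n p lam (dyadicI n p) / (volume (dyadicI n p)).toReal)
          < |r * ∑ i : Fin (2*k+1), haarCoeff n p lam (c i) * haarF (c i).1 (c i).2 x|}
      = (1/4) * ((2:ℝ)^(4*k))⁻¹ * muMeas n p lam (dyadicI n p) :=
  stmt6_general k hk n p lam r hlam hr c h0 hjp hlen
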